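/- Let G = (S ∪ K, E) be a split graph with no isolated vertices, where S is an independent set and K is a clique, and assume K is a maximum clique of G, i.e., ω(G) = |K|. Then 1 ≤ Tr_t(G) ≤ ω(G) - 1. -/

import Mathlib

/-- A total transitive partition of `G` into `k` parts: the parts are nonempty, they
partition the vertex set, and `V_i` dominates `V_j` for all `i ≤ j`. -/
def TTPartition {V : Type*} (G : SimpleGraph V) (k : ℕ) (P : Fin k → Set V) : Prop :=
  (∀ i, (P i).Nonempty) ∧
  (∀ v : V, ∃! i, v ∈ P i) ∧
  (∀ i j : Fin k, i ≤ j → ∀ v ∈ P j, ∃ u ∈ P i, G.Adj u v)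

/-! Every part of a total transitive partition dominates itself, so it contains an edge and hence,
`S` being independent, a vertex `w i` of `K`. If some part holds a second vertex of `K`, it
together with the `w i` forms a clique of size `k + 1` inside `K`. Otherwise the last part
contains a neighbour `u ∉ K` of its `w`, and each part dominates `u` through its only
vertex of `K`; so `u` and the `w i` form a clique of size `k + 1`. Either way `k + 1 ≤ ω(G)`. -/

open Set

theorem Set.ncard_insert_range_of_injective {V : Type*} {k : ℕ} {w : Fin k → V}
    (hw : Function.Injective w) {x : V} (hx : x ∉ range w) :
    (insert x (range w)).ncard = k + 1 := by
  rw [ncard_insert_of_notMem hx, ncard_range_of_injective hw, Nat.card_eq_fintype_card,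
    Fintype.card_fin]

theorem mem_of_adj_of_notMem {V : Type*} {G : SimpleGraph V} {S K : Set V}
    (hcover : S ∪ K = univ) (hS : ∀ u ∈ S, ∀ v ∈ S, ¬ G.Adj u v) {u v : V} (huv : G.Adj u v)
    (hv : v ∉ K) : u ∈ K := by
  have hSK : ∀ x, x ∉ K → x ∈ S := fun x hx =>
    ((hcover ▸ mem_univ x : x ∈ S ∪ K)).resolve_right hx
  by_contra hu
  exact hS u (hSK u hu) v (hSK v hv) huv

namespace TTPartition

variable {V : Type*} {G : SimpleGraph V} {k : ℕ} {P : Fin k → Set V}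

theorem univ_of_forall_exists_adj [Nonempty V] (hiso : ∀ v : V, ∃ u : V, G.Adj v u) :
    TTPartition G 1 (fun _ => univ) := by
  refine ⟨fun _ => univ_nonempty, fun v => ⟨0, trivial, fun i _ => Subsingleton.elim i 0⟩, ?_⟩
  intro _ _ _ v _
  obtain ⟨u, hu⟩ := hiso v
  exact ⟨u, trivial, hu.symm⟩

theorem eq_of_mem (hP : TTPartition G k P) {v : V} {i j : Fin k} (hi : v ∈ P i)
    (hj : v ∈ P j) : i = j :=
  (hP.2.1 v).unique hi hj

section Split

variable {S K : Set V} (hcover : S ∪ K = univ) (hS : ∀ u ∈ S, ∀ v ∈ S, ¬ G.Adj u v)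
include hcover hS

theorem exists_mem_inter (hP : TTPartition G k P) (i : Fin k) : ∃ x ∈ P i, x ∈ K := by
  obtain ⟨v, hv⟩ := hP.1 i
  by_cases hvK : v ∈ K
  · exact ⟨v, hv, hvK⟩
  · obtain ⟨u, hu, huv⟩ := hP.2.2 i i le_rfl v hv
    exact ⟨u, hu, mem_of_adj_of_notMem hcover hS huv hvK⟩

/-- The witness is a neighbour of `w` in the last part, which every part must dominate. -/
theorem exists_common_neighbor (hP : TTPartition G k P) (hk : 0 < k) {w : Fin k → V}
    (hwP : ∀ i, w i ∈ P i) (hw : ∀ i, ∀ x ∈ P i, x ∈ K → x = w i) :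
    ∃ u ∉ K, ∀ i, G.Adj (w i) u := by
  let l : Fin k := ⟨k - 1, by omega⟩
  have hle : ∀ i : Fin k, i ≤ l := fun i => Fin.le_def.mpr (by simp [l]; omega)
  obtain ⟨u, huP, huw⟩ := hP.2.2 l l le_rfl (w l) (hwP l)
  have huK : u ∉ K := fun huK => huw.ne (hw l u huP huK)
  refine ⟨u, huK, fun i => ?_⟩
  obtain ⟨t, htP, htu⟩ := hP.2.2 i l (hle i) u huP
  rwa [← hw i t htP (mem_of_adj_of_notMem hcover hS htu huK)]

theorem exists_isClique_ncard (hK : G.IsClique K) (hP : TTPartition G k P) (hk : 0 < k) :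
    ∃ C : Set V, G.IsClique C ∧ C.ncard = k + 1 := by
  choose w hwP hwK using hP.exists_mem_inter hcover hS
  have hw_inj : Function.Injective w := fun i j h => hP.eq_of_mem (hwP i) (h ▸ hwP j)
  have hw_range : range w ⊆ K := range_subset_iff.mpr hwK
  by_cases hsecond : ∃ i, ∃ x ∈ P i, x ∈ K ∧ x ≠ w i
  · obtain ⟨i, x, hxP, hxK, hxw⟩ := hsecond
    have hx : x ∉ range w := by
      rintro ⟨j, rfl⟩
      exact hxw (congrArg w (hP.eq_of_mem (hwP j) hxP))
    exact ⟨_, hK.subset (insert_subset hxK hw_range), ncard_insert_range_of_injective hw_inj hx⟩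
  · push Not at hsecond
    obtain ⟨u, huK, hadj⟩ := hP.exists_common_neighbor hcover hS hk hwP hsecond
    have hclique : G.IsClique (insert u (range w)) := by
      refine (hK.subset hw_range).insert ?_
      rintro _ ⟨i, rfl⟩ -
      exact (hadj i).symm
    exact ⟨_, hclique, ncard_insert_range_of_injective hw_inj fun hu => huK (hw_range hu)⟩

end Split

end TTPartition

theorem stmt11_general {V : Type*} [Nonempty V] (G : SimpleGraph V)
    (S K : Set V) (hcover : S ∪ K = Set.univ)
    (hS : ∀ u ∈ S, ∀ v ∈ S, ¬ G.Adj u v)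
    (hK : G.IsClique K)
    (hmax : ∀ C : Set V, G.IsClique C → C.ncard ≤ K.ncard)
    (hiso : ∀ v : V, ∃ u : V, G.Adj v u) :
    (∃ P : Fin 1 → Set V, TTPartition G 1 P) ∧
      (∀ k : ℕ, (∃ P : Fin k → Set V, TTPartition G k P) → k ≤ K.ncard - 1) := by
  refine ⟨⟨_, TTPartition.univ_of_forall_exists_adj hiso⟩, ?_⟩
  rintro k ⟨P, hP⟩
  rcases Nat.eq_zero_or_pos k with rfl | hk
  · exact Nat.zero_le _
  obtain ⟨C, hC, hcard⟩ := hP.exists_isClique_ncard hcover hS hK hk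
  have := hmax C hC
  omega

/-- Let `G` be a split graph without isolated vertices, with vertex set partitioned into
an independent set `S` and a clique `K`, where `K` is a maximum clique (`ω(G) = |K|`).
Then `1 ≤ Tr_t(G) ≤ ω(G) - 1`. -/
theorem stmt11 {V : Type*} [Fintype V] [Nonempty V] (G : SimpleGraph V)
    (S K : Set V) (hdisj : Disjoint S K) (hcover : S ∪ K = Set.univ)
    (hS : ∀ u ∈ S, ∀ v ∈ S, ¬ G.Adj u v)
    (hK : G.IsClique K)
    (hmax : ∀ C : Set V, G.IsClique C → C.ncard ≤ K.ncard)
    (hiso : ∀ v : V, ∃ u : V, G.Adj v u) :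
    (∃ P : Fin 1 → Set V, TTPartition G 1 P) ∧
      (∀ k : ℕ, (∃ P : Fin k → Set V, TTPartition G k P) → k ≤ K.ncard - 1) :=
  stmt11_general G S K hcover hS hK hmax hiso
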